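/- arXiv:2001.07805 — 6 statements merged into one kernel-verified Lean document; each statement's English description precedes it below -/
import Mathlib

section
/- (Lemma 1) Let p* be a Borel probability measure on ℝ^d that is halfspace-symmetric with center μ* and has decay function h. Let α > 0 and let y ∈ ℝ^d satisfy D(y, p*) ≥ α. Then for every t ≥ 0 with h(t) < α, we have ‖y − μ*‖ ≤ t; equivalently, ‖y − μ*‖ ≤ h^{-1}(α), where h^{-1}(α) = inf{t ≥ 0 : h(t) < α}. -/
open MeasureTheory
open scoped RealInnerProductSpace ENNReal

noncomputable section

abbrev Euc (d : ℕ) := EuclideanSpace ℝ (Fin d)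

/-- Tukey depth of a point `μ` w.r.t. a measure `p`: the infimum over nonzero
directions `v` of the mass of the halfspace `{x | ⟪v, x - μ⟫ ≥ 0}`. -/
def tukeyDepth {d : ℕ} (μ : Euc d) (p : Measure (Euc d)) : ℝ :=
  ⨅ v : {v : Euc d // v ≠ 0}, (p {x | 0 ≤ ⟪(v : Euc d), x - μ⟫}).toReal

/-- `x` is a Tukey median of `p` if it maximizes the Tukey depth. -/
def IsTukeyMedian {d : ℕ} (x : Euc d) (p : Measure (Euc d)) : Prop :=
  ∀ y : Euc d, tukeyDepth y p ≤ tukeyDepth x p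

/-- Total variation distance: supremum over Borel sets `A` of `p A - q A`. -/
def tvDist {d : ℕ} (p q : Measure (Euc d)) : ℝ :=
  ⨆ A : {A : Set (Euc d) // MeasurableSet A}, ((p A).toReal - (q A).toReal)

/-- The halfspace metric `TV~(p, q)`. -/
def halfspaceDist {d : ℕ} (p q : Measure (Euc d)) : ℝ :=
  ⨆ vt : Euc d × ℝ,
    |(p {x | vt.2 ≤ ⟪vt.1, x⟫}).toReal - (q {x | vt.2 ≤ ⟪vt.1, x⟫}).toReal|

/-- Halfspace symmetry around `μ`: every one-dimensional projection of `X - μ`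
is symmetric in distribution. -/
def IsHalfspaceSymmetric {d : ℕ} (p : Measure (Euc d)) (μ : Euc d) : Prop :=
  ∀ v : Euc d,
    p.map (fun x => ⟪v, x - μ⟫) = p.map (fun x => -⟪v, x - μ⟫)

/-- Decay function `h(t)` of a measure `p` centered at `μ`. -/
def decay {d : ℕ} (p : Measure (Euc d)) (μ : Euc d) (t : ℝ) : ℝ :=
  ⨆ v : {v : Euc d // ‖v‖ ≤ 1}, (p {x | t < ⟪(v : Euc d), x - μ⟫}).toReal

/-! The halfspace through `y` whose inward normal is the unit vector `v` pointing from `μ*` to `y`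
has mass at least `D(y, p*) ≥ α`; if `t < ‖y - μ*‖` it lies inside `{x | t < ⟪v, x - μ*⟫}`,
whose mass is at most `h(t)`, so `h(t) ≥ α`. -/

lemma tukeyDepth_le_measure_halfspace {d : ℕ} (p : Measure (Euc d)) (y : Euc d) {v : Euc d}
    (hv : v ≠ 0) : tukeyDepth y p ≤ (p {x | 0 ≤ ⟪v, x - y⟫}).toReal :=
  ciInf_le ⟨0, by rintro _ ⟨w, rfl⟩; exact ENNReal.toReal_nonneg⟩ (⟨v, hv⟩ : {v : Euc d // v ≠ 0})

lemma measure_lt_inner_le_decay {d : ℕ} (p : Measure (Euc d)) [IsFiniteMeasure p] (μ : Euc d)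
    (t : ℝ) {v : Euc d} (hv : ‖v‖ ≤ 1) : (p {x | t < ⟪v, x - μ⟫}).toReal ≤ decay p μ t :=
  le_ciSup (f := fun w : {v : Euc d // ‖v‖ ≤ 1} => (p {x | t < ⟪(w : Euc d), x - μ⟫}).toReal)
    ⟨p.real Set.univ, by rintro _ ⟨w, rfl⟩; exact measureReal_mono (Set.subset_univ _)⟩ ⟨v, hv⟩

lemma setOf_inner_sub_nonneg_subset {E : Type*} [NormedAddCommGroup E] [InnerProductSpace ℝ E]
    {v y μ : E} {t : ℝ} (ht : t < ⟪v, y - μ⟫) :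
    {x | 0 ≤ ⟪v, x - y⟫} ⊆ {x | t < ⟪v, x - μ⟫} := by
  intro x (hx : 0 ≤ ⟪v, x - y⟫)
  have hsplit : ⟪v, x - μ⟫ = ⟪v, x - y⟫ + ⟪v, y - μ⟫ := by
    rw [← inner_add_right, sub_add_sub_cancel]
  show t < ⟪v, x - μ⟫
  linarith

lemma tukeyDepth_le_decay_of_lt_norm_sub {d : ℕ} (p : Measure (Euc d)) [IsFiniteMeasure p]
    (μ y : Euc d) {t : ℝ} (ht : 0 ≤ t) (hty : t < ‖y - μ‖) : tukeyDepth y p ≤ decay p μ t := by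
  have hyμ : y - μ ≠ 0 := norm_pos_iff.mp (ht.trans_lt hty)
  set v : Euc d := (‖y - μ‖⁻¹ : ℝ) • (y - μ)
  have hv_norm : ‖v‖ = 1 := norm_smul_inv_norm hyμ
  have hv_inner : ⟪v, y - μ⟫ = ‖y - μ‖ := by
    rw [real_inner_smul_left, real_inner_self_eq_norm_sq]
    field_simp
  calc tukeyDepth y p ≤ (p {x | 0 ≤ ⟪v, x - y⟫}).toReal :=
        tukeyDepth_le_measure_halfspace p y (norm_ne_zero_iff.mp (by simp [hv_norm]))
    _ ≤ (p {x | t < ⟪v, x - μ⟫}).toReal :=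
        measureReal_mono (setOf_inner_sub_nonneg_subset (hv_inner ▸ hty))
    _ ≤ decay p μ t := measure_lt_inner_le_decay p μ t hv_norm.le

theorem norm_sub_le_of_tukeyDepth_ge_general {d : ℕ}
    (pstar : Measure (Euc d)) [IsProbabilityMeasure pstar]
    (μstar : Euc d)
    (α : ℝ)
    (y : Euc d) (hy : α ≤ tukeyDepth y pstar) :
    ∀ t : ℝ, 0 ≤ t → decay pstar μstar t < α → ‖y - μstar‖ ≤ t := by
  intro t ht hdec
  by_contra! hlt
  exact (hy.trans (tukeyDepth_le_decay_of_lt_norm_sub pstar μstar y ht hlt)).not_gt hdec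

/-- **Lemma 1.** If `p*` is halfspace-symmetric with center `μ*`
and decay function `h`, `α > 0`, and `D(y, p*) ≥ α`, then for every `t ≥ 0` with
`h(t) < α` we have `‖y − μ*‖ ≤ t` (equivalently, `‖y − μ*‖ ≤ h⁻¹(α)`). -/
theorem norm_sub_le_of_tukeyDepth_ge {d : ℕ}
    (pstar : Measure (Euc d)) [IsProbabilityMeasure pstar]
    (μstar : Euc d) (hsym : IsHalfspaceSymmetric pstar μstar)
    (α : ℝ) (hα : 0 < α)
    (y : Euc d) (hy : α ≤ tukeyDepth y pstar) :
    ∀ t : ℝ, 0 ≤ t → decay pstar μstar t < α → ‖y - μstar‖ ≤ t :=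
  norm_sub_le_of_tukeyDepth_ge_general pstar μstar α y hy

end
end

section
/- (Theorem 2, TV corruption, general dimension) Let p* be a Borel probability measure on ℝ^d that is halfspace-symmetric with center μ* and has decay function h. Let p be a Borel probability measure with TV(p, p*) ≤ ε, and let x be a Tukey median of p. Then D(x, p*) ≥ 1 − h(0) − 2ε, and consequently for every t ≥ 0 with h(t) < 1 − h(0) − 2ε we have ‖x − μ*‖ ≤ t. -/
open MeasureTheory
open scoped RealInnerProductSpace ENNReal

noncomputable section

/-! Each halfspace mass moves by at most `TV(p, p*)` when `p*` is replaced by `p`, hence so does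
the Tukey depth of every point. By symmetry a closed halfspace through `μ*` has `p*`-mass
`1 - p*(open opposite halfspace) ≥ 1 - h(0)`, so `D(μ*, p*) ≥ 1 - h(0)`, and for the Tukey median
`D(x, p*) ≥ D(x, p) - ε ≥ D(μ*, p) - ε ≥ D(μ*, p*) - 2ε`. Conversely, if `‖x - μ*‖ > t ≥ 0`, the
halfspace through `x` with inner normal `x - μ*` lies in `{y | t < ⟪u, y - μ*⟫}` for the unit
vector `u` along `x - μ*`, so `D(x, p*) ≤ h(t) < D(x, p*)`. -/

variable {d : ℕ}

lemma measurableSet_halfspace (v μ : Euc d) : MeasurableSet {x : Euc d | 0 ≤ ⟪v, x - μ⟫} :=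
  measurableSet_le measurable_const (by fun_prop)

lemma measureReal_sub_le_tvDist (p q : Measure (Euc d)) [IsProbabilityMeasure p]
    {A : Set (Euc d)} (hA : MeasurableSet A) : p.real A - q.real A ≤ tvDist p q := by
  refine le_ciSup (f := fun A : {A : Set (Euc d) // MeasurableSet A} => p.real A - q.real A)
    ⟨1, ?_⟩ ⟨A, hA⟩
  rintro _ ⟨B, rfl⟩
  linarith [measureReal_le_one (μ := p) (s := B.1), measureReal_nonneg (μ := q) (s := B.1)]

lemma abs_measureReal_sub_le_tvDist (p q : Measure (Euc d))
    [IsProbabilityMeasure p] [IsProbabilityMeasure q]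
    {A : Set (Euc d)} (hA : MeasurableSet A) : |p.real A - q.real A| ≤ tvDist p q := by
  have hcompl := measureReal_sub_le_tvDist p q hA.compl
  rw [probReal_compl_eq_one_sub hA, probReal_compl_eq_one_sub hA] at hcompl
  exact abs_sub_le_iff.mpr ⟨measureReal_sub_le_tvDist p q hA, by linarith⟩

lemma tukeyDepth_le_measureReal (y v : Euc d) (hv : v ≠ 0) (p : Measure (Euc d)) :
    tukeyDepth y p ≤ p.real {x | 0 ≤ ⟪v, x - y⟫} :=
  ciInf_le ⟨0, by rintro _ ⟨w, rfl⟩; exact ENNReal.toReal_nonneg⟩ (⟨v, hv⟩ : {v : Euc d // v ≠ 0})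

lemma le_tukeyDepth (hd : 0 < d) {y : Euc d} {p : Measure (Euc d)} {c : ℝ}
    (h : ∀ v : Euc d, v ≠ 0 → c ≤ p.real {x | 0 ≤ ⟪v, x - y⟫}) : c ≤ tukeyDepth y p := by
  have : Nontrivial (Euc d) := Module.nontrivial_of_finrank_pos (R := ℝ) (by simpa using hd)
  have : Nonempty {v : Euc d // v ≠ 0} := nonempty_subtype.mpr (exists_ne 0)
  exact le_ciInf fun v => h v v.2

lemma abs_tukeyDepth_sub_le_tvDist (hd : 0 < d) (y : Euc d) (p q : Measure (Euc d))
    [IsProbabilityMeasure p] [IsProbabilityMeasure q] :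
    |tukeyDepth y p - tukeyDepth y q| ≤ tvDist p q := by
  have hmass (v : Euc d) := abs_sub_le_iff.mp
    (abs_measureReal_sub_le_tvDist p q (measurableSet_halfspace v y))
  refine abs_sub_le_iff.mpr ⟨?_, ?_⟩ <;> refine sub_le_comm.mp (le_tukeyDepth hd fun v hv => ?_)
  · linarith [tukeyDepth_le_measureReal y v hv p, (hmass v).1]
  · linarith [tukeyDepth_le_measureReal y v hv q, (hmass v).2]

lemma measureReal_mul_norm_lt_inner_le_decay (p : Measure (Euc d)) [IsFiniteMeasure p]
    (μ : Euc d) (t : ℝ) {v : Euc d} (hv : v ≠ 0) :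
    p.real {x | t * ‖v‖ < ⟪v, x - μ⟫} ≤ decay p μ t := by
  have hnorm : 0 < ‖v‖ := norm_pos_iff.mpr hv
  have hunit : ‖‖v‖⁻¹ • v‖ ≤ 1 := by
    rw [norm_smul, norm_inv, norm_norm, inv_mul_cancel₀ hnorm.ne']
  have hset : {x | t * ‖v‖ < ⟪v, x - μ⟫} = {x : Euc d | t < ⟪‖v‖⁻¹ • v, x - μ⟫} := by
    ext x
    rw [Set.mem_ofPred_eq, Set.mem_ofPred_eq, real_inner_smul_left, ← div_eq_inv_mul,
      lt_div_iff₀ hnorm]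
  rw [hset]
  refine le_ciSup (f := fun u : {u : Euc d // ‖u‖ ≤ 1} => p.real {x | t < ⟪(u : Euc d), x - μ⟫})
    ⟨p.real Set.univ, ?_⟩ ⟨_, hunit⟩
  rintro _ ⟨u, rfl⟩
  exact measureReal_mono (Set.subset_univ _)

lemma IsHalfspaceSymmetric.measure_inner_neg_eq {p : Measure (Euc d)} {μ : Euc d}
    (hsym : IsHalfspaceSymmetric p μ) (v : Euc d) :
    p {x | ⟪v, x - μ⟫ < 0} = p {x | 0 < ⟪v, x - μ⟫} := by
  have hmeas : Measurable fun x : Euc d => ⟪v, x - μ⟫ := by fun_prop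
  have := congrArg (· (Set.Ioi 0)) (hsym v)
  simp only [Measure.map_apply hmeas measurableSet_Ioi,
    Measure.map_apply (f := fun x => -⟪v, x - μ⟫) hmeas.neg measurableSet_Ioi] at this
  simpa [Set.preimage, neg_pos] using this.symm

lemma IsHalfspaceSymmetric.one_sub_decay_le_tukeyDepth (hd : 0 < d) {p : Measure (Euc d)}
    [IsProbabilityMeasure p] {μ : Euc d} (hsym : IsHalfspaceSymmetric p μ) :
    1 - decay p μ 0 ≤ tukeyDepth μ p := by
  refine le_tukeyDepth hd fun v hv => ?_
  have hcompl : {x : Euc d | 0 ≤ ⟪v, x - μ⟫}ᶜ = {x | ⟪v, x - μ⟫ < 0} := by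
    ext x; simp
  have hpos := measureReal_mul_norm_lt_inner_le_decay p μ 0 hv
  rw [zero_mul] at hpos
  have := probReal_compl_eq_one_sub (μ := p) (measurableSet_halfspace v μ)
  rw [hcompl, measureReal_def, hsym.measure_inner_neg_eq, ← measureReal_def] at this
  linarith

lemma tukeyDepth_le_decay_of_lt_norm (p : Measure (Euc d)) [IsFiniteMeasure p]
    {x μ : Euc d} {t : ℝ} (ht₀ : 0 ≤ t) (ht : t < ‖x - μ‖) : tukeyDepth x p ≤ decay p μ t := by
  have hne : x - μ ≠ 0 := norm_pos_iff.mp (ht₀.trans_lt ht)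
  have hsub : {y : Euc d | 0 ≤ ⟪x - μ, y - x⟫} ⊆ {y | t * ‖x - μ‖ < ⟪x - μ, y - μ⟫} := by
    intro y hy
    have hsplit : ⟪x - μ, y - μ⟫ = ⟪x - μ, y - x⟫ + ‖x - μ‖ ^ 2 := by
      rw [← real_inner_self_eq_norm_sq, ← inner_add_right, sub_add_sub_cancel]
    have : t * ‖x - μ‖ < ‖x - μ‖ ^ 2 := by nlinarith
    simp only [Set.mem_ofPred_eq] at hy ⊢
    linarith
  calc tukeyDepth x p ≤ p.real {y | 0 ≤ ⟪x - μ, y - x⟫} := tukeyDepth_le_measureReal x _ hne p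
    _ ≤ p.real {y | t * ‖x - μ‖ < ⟪x - μ, y - μ⟫} := measureReal_mono hsub
    _ ≤ decay p μ t := measureReal_mul_norm_lt_inner_le_decay p μ t hne

/-- **Theorem 2, TV corruption, general dimension.**
If `p*` is halfspace-symmetric with center `μ*` and decay function `h`,
`TV(p, p*) ≤ ε`, and `x` is a Tukey median of `p`, then
`D(x, p*) ≥ 1 − h(0) − 2ε`, and consequently for every `t ≥ 0` with
`h(t) < 1 − h(0) − 2ε` we have `‖x − μ*‖ ≤ t`. -/
theorem tukey_median_tv_corruption {d : ℕ} (hd : 0 < d)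
    (pstar p : Measure (Euc d))
    [IsProbabilityMeasure pstar] [IsProbabilityMeasure p]
    (μstar : Euc d) (hsym : IsHalfspaceSymmetric pstar μstar)
    (ε : ℝ) (htv : tvDist p pstar ≤ ε)
    (x : Euc d) (hx : IsTukeyMedian x p) :
    1 - decay pstar μstar 0 - 2 * ε ≤ tukeyDepth x pstar ∧
    ∀ t : ℝ, 0 ≤ t → decay pstar μstar t < 1 - decay pstar μstar 0 - 2 * ε →
      ‖x - μstar‖ ≤ t := by
  have hdepth : 1 - decay pstar μstar 0 - 2 * ε ≤ tukeyDepth x pstar := by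
    have hcenter := hsym.one_sub_decay_le_tukeyDepth hd
    have hcenter_shift := abs_sub_le_iff.mp (abs_tukeyDepth_sub_le_tvDist hd μstar p pstar)
    have hx_shift := abs_sub_le_iff.mp (abs_tukeyDepth_sub_le_tvDist hd x p pstar)
    linarith [hx μstar]
  refine ⟨hdepth, fun t ht₀ hdecay => ?_⟩
  by_contra! hfar
  linarith [tukeyDepth_le_decay_of_lt_norm pstar ht₀ hfar]

end
end

section
/- (Theorem 2, TV corruption, dimension one) Let p* be a Borel probability measure on ℝ that is halfspace-symmetric with center μ* and has decay function h. Let p be a Borel probability measure on ℝ with TV(p, p*) ≤ ε, and let x be a Tukey median of p. Then D(x, p*) ≥ max(1 − h(0) − 2ε, 1/2 − ε), and consequently for every t ≥ 0 with h(t) < max(1 − h(0) − 2ε, 1/2 − ε) we have |x − μ*| ≤ t. -/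
open MeasureTheory
open scoped ENNReal

noncomputable section

/-- One-dimensional Tukey depth: `min (p [μ, ∞)) (p (-∞, μ])`. -/
def tukeyDepth1 (μ : ℝ) (p : Measure ℝ) : ℝ :=
  min (p (Set.Ici μ)).toReal (p (Set.Iic μ)).toReal

/-- `x` is a Tukey median (in dimension one) of `p`. -/
def IsTukeyMedian1 (x : ℝ) (p : Measure ℝ) : Prop :=
  ∀ y : ℝ, tukeyDepth1 y p ≤ tukeyDepth1 x p

/-- Total variation distance on `ℝ`: supremum over Borel sets `A` of `p A - q A`. -/
def tvDist1 (p q : Measure ℝ) : ℝ :=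
  ⨆ A : {A : Set ℝ // MeasurableSet A}, ((p A).toReal - (q A).toReal)

/-- Halfspace symmetry on `ℝ` around `μ`: every projection `v * (x - μ)` is
symmetric in distribution. -/
def IsHalfspaceSymmetric1 (p : Measure ℝ) (μ : ℝ) : Prop :=
  ∀ v : ℝ, p.map (fun x => v * (x - μ)) = p.map (fun x => -(v * (x - μ)))

/-- Decay function on `ℝ` centered at `μ`. -/
def decay1 (p : Measure ℝ) (μ : ℝ) (t : ℝ) : ℝ :=
  ⨆ v : {v : ℝ // |v| ≤ 1}, (p {x | t < (v : ℝ) * (x - μ)}).toReal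

/-!
Replacing `p` by `q` changes each half-line mass, hence the Tukey depth `min (p [y, ∞)) (p (-∞, y])`
at any point, by at most `TV(p, q)`. So `D(x, p*) ≥ D(x, p) - ε ≥ D(y, p) - ε ≥ D(y, p*) - 2ε` for
every `y`, since `x` maximizes `D(·, p)`. Taking `y = μ*`, whose two open half-lines are halfspaces
counted by `h(0)`, gives `D(μ*, p*) ≥ 1 - h(0)`; taking `y` a median of `p` gives `D(y, p) ≥ 1/2`.
Finally, a point at distance more than `t` from `μ*` has a closed half-line lying in a halfspace
counted by `h(t)`, so its depth under `p*` is at most `h(t)`.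
-/

open Set Filter ProbabilityTheory

lemma tukeyDepth1_eq_min_measureReal (y : ℝ) (p : Measure ℝ) :
    tukeyDepth1 y p = min (p.real (Ici y)) (p.real (Iic y)) :=
  rfl

lemma measureReal_sub_le_tvDist1 (p q : Measure ℝ) [IsFiniteMeasure p] {A : Set ℝ}
    (hA : MeasurableSet A) : p.real A - q.real A ≤ tvDist1 p q := by
  refine le_ciSup (f := fun A : {A : Set ℝ // MeasurableSet A} => p.real A - q.real A)
    ⟨p.real univ, ?_⟩ ⟨A, hA⟩
  rintro _ ⟨B, rfl⟩
  linarith [measureReal_mono (μ := p) (subset_univ B.1), measureReal_nonneg (μ := q) (s := B.1)]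

lemma tvDist1_le_swap (p q : Measure ℝ) [IsProbabilityMeasure p] [IsProbabilityMeasure q] :
    tvDist1 p q ≤ tvDist1 q p := by
  have : Nonempty {A : Set ℝ // MeasurableSet A} := ⟨⟨∅, .empty⟩⟩
  refine ciSup_le fun A => ?_
  calc p.real A - q.real A = q.real A.1ᶜ - p.real A.1ᶜ := by
        rw [probReal_compl_eq_one_sub A.2, probReal_compl_eq_one_sub A.2]; ring
    _ ≤ tvDist1 q p := measureReal_sub_le_tvDist1 q p A.2.compl

lemma tvDist1_comm (p q : Measure ℝ) [IsProbabilityMeasure p] [IsProbabilityMeasure q] :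
    tvDist1 p q = tvDist1 q p :=
  (tvDist1_le_swap p q).antisymm (tvDist1_le_swap q p)

lemma tukeyDepth1_le_add_tvDist1 (p q : Measure ℝ) [IsFiniteMeasure p] (y : ℝ) :
    tukeyDepth1 y p ≤ tukeyDepth1 y q + tvDist1 p q := by
  rw [tukeyDepth1_eq_min_measureReal, tukeyDepth1_eq_min_measureReal, ← min_add_add_right]
  exact min_le_min
    (by linarith [measureReal_sub_le_tvDist1 p q (measurableSet_Ici (a := y))])
    (by linarith [measureReal_sub_le_tvDist1 p q (measurableSet_Iic (a := y))])

lemma measureReal_le_decay1 (p : Measure ℝ) [IsFiniteMeasure p] (μ t : ℝ) {v : ℝ}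
    (hv : |v| ≤ 1) : p.real {x | t < v * (x - μ)} ≤ decay1 p μ t :=
  le_ciSup (f := fun v : {v : ℝ // |v| ≤ 1} => p.real {x | t < v * (x - μ)})
    ⟨p.real univ, by rintro _ ⟨w, rfl⟩; exact measureReal_mono (subset_univ _)⟩ ⟨v, hv⟩

lemma one_sub_decay1_zero_le_tukeyDepth1 (p : Measure ℝ) [IsProbabilityMeasure p] (μ : ℝ) :
    1 - decay1 p μ 0 ≤ tukeyDepth1 μ p := by
  have hIio : {x | (0 : ℝ) < -1 * (x - μ)} = Iio μ := by
    ext x; simp only [mem_ofPred_eq, mem_Iio]; constructor <;> intro <;> linarith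
  have hIoi : {x | (0 : ℝ) < 1 * (x - μ)} = Ioi μ := by
    ext x; simp only [mem_ofPred_eq, mem_Ioi]; constructor <;> intro <;> linarith
  have hleft := measureReal_le_decay1 p μ 0 (v := -1) (by norm_num)
  have hright := measureReal_le_decay1 p μ 0 (v := 1) (by norm_num)
  rw [hIio] at hleft
  rw [hIoi] at hright
  rw [tukeyDepth1_eq_min_measureReal]
  refine le_min ?_ ?_
  · rw [← compl_Iio, probReal_compl_eq_one_sub measurableSet_Iio]; linarith
  · rw [← compl_Ioi, probReal_compl_eq_one_sub measurableSet_Ioi]; linarith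

lemma abs_sub_le_of_decay1_lt_tukeyDepth1 (p : Measure ℝ) [IsFiniteMeasure p] {μ t x : ℝ}
    (h : decay1 p μ t < tukeyDepth1 x p) : |x - μ| ≤ t := by
  rw [tukeyDepth1_eq_min_measureReal] at h
  rw [abs_sub_le_iff]
  constructor
  · by_contra! hx
    have hsub : Ici x ⊆ {y | t < 1 * (y - μ)} := fun y (hy : x ≤ y) =>
      show t < 1 * (y - μ) by linarith
    linarith [min_le_left (p.real (Ici x)) (p.real (Iic x)), measureReal_mono (μ := p) hsub,
      measureReal_le_decay1 p μ t (v := 1) (by norm_num)]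
  · by_contra! hx
    have hsub : Iic x ⊆ {y | t < -1 * (y - μ)} := fun y (hy : y ≤ x) =>
      show t < -1 * (y - μ) by linarith
    linarith [min_le_right (p.real (Ici x)) (p.real (Iic x)), measureReal_mono (μ := p) hsub,
      measureReal_le_decay1 p μ t (v := -1) (by norm_num)]

lemma measure_Iio_le_of_forall_lt {μ : Measure ℝ} {m : ℝ} {c : ℝ≥0∞}
    (h : ∀ y < m, μ (Iic y) ≤ c) : μ (Iio m) ≤ c := by
  obtain ⟨u, hu_mono, hu_lt, hu_lim⟩ := exists_seq_strictMono_tendsto m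
  rw [← iUnion_Iic_eq_Iio_of_lt_of_tendsto hu_lt hu_lim,
    Monotone.measure_iUnion fun _ _ hab => Iic_subset_Iic.2 (hu_mono.monotone hab)]
  exact iSup_le fun n => h _ (hu_lt n)

lemma exists_half_le_tukeyDepth1 (p : Measure ℝ) [IsProbabilityMeasure p] :
    ∃ m, 1 / 2 ≤ tukeyDepth1 m p := by
  set F := cdf p
  set S := {y | 1 / 2 ≤ F y}
  have hS_nonempty : S.Nonempty :=
    (((tendsto_order.1 (tendsto_cdf_atTop p)).1 (1 / 2) (by norm_num)).mono
      fun _ hy => hy.le).exists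
  have hS_bdd : BddBelow S := by
    obtain ⟨a, ha⟩ := eventually_atBot.1 ((tendsto_order.1 (tendsto_cdf_atBot p)).2 (1 / 2)
      (by norm_num))
    exact ⟨a, fun s hs => not_lt.1 fun hsa => (ha s hsa.le).not_ge hs⟩
  set m := sInf S
  have hIic : 1 / 2 ≤ F m := by
    refine ge_of_tendsto ((F.right_continuous m).mono Ioi_subset_Ici_self)
      (eventually_nhdsWithin_of_forall fun y (hy : m < y) => ?_)
    obtain ⟨s, hs, hsy⟩ := (csInf_lt_iff hS_bdd hS_nonempty).1 hy
    exact hs.trans (monotone_cdf p hsy.le)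
  have hIio : p (Iio m) ≤ ENNReal.ofReal (1 / 2) := by
    refine measure_Iio_le_of_forall_lt fun y hy => ?_
    rw [← ofReal_cdf]
    exact ENNReal.ofReal_le_ofReal (not_le.1 (notMem_of_lt_csInf (s := S) hy hS_bdd)).le
  refine ⟨m, ?_⟩
  rw [tukeyDepth1_eq_min_measureReal, ← compl_Iio, probReal_compl_eq_one_sub measurableSet_Iio,
    ← cdf_eq_real]
  have : p.real (Iio m) ≤ 1 / 2 := ENNReal.toReal_le_of_le_ofReal (by norm_num) hIio
  exact le_min (by linarith) hIic

theorem tukey_median_tv_corruption_dim_one_general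
    (pstar p : Measure ℝ)
    [IsProbabilityMeasure pstar] [IsProbabilityMeasure p]
    (μstar : ℝ)
    (ε : ℝ) (htv : tvDist1 p pstar ≤ ε)
    (x : ℝ) (hx : IsTukeyMedian1 x p) :
    max (1 - decay1 pstar μstar 0 - 2 * ε) (1 / 2 - ε) ≤ tukeyDepth1 x pstar ∧
    ∀ t : ℝ, 0 ≤ t →
      decay1 pstar μstar t < max (1 - decay1 pstar μstar 0 - 2 * ε) (1 / 2 - ε) →
      |x - μstar| ≤ t := by
  have hx_star : tukeyDepth1 x p - ε ≤ tukeyDepth1 x pstar := by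
    linarith [tukeyDepth1_le_add_tvDist1 p pstar x]
  have hcenter : 1 - decay1 pstar μstar 0 - ε ≤ tukeyDepth1 μstar p := by
    linarith [one_sub_decay1_zero_le_tukeyDepth1 pstar μstar,
      tukeyDepth1_le_add_tvDist1 pstar p μstar, tvDist1_comm p pstar]
  obtain ⟨m, hm⟩ := exists_half_le_tukeyDepth1 p
  have hdepth : max (1 - decay1 pstar μstar 0 - 2 * ε) (1 / 2 - ε) ≤ tukeyDepth1 x pstar :=
    max_le (by linarith [hx μstar]) (by linarith [hx m])
  exact ⟨hdepth, fun t _ ht => abs_sub_le_of_decay1_lt_tukeyDepth1 pstar (ht.trans_le hdepth)⟩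

/-- **Theorem 2, TV corruption, dimension one.**
If `p*` on `ℝ` is halfspace-symmetric with center `μ*` and decay function `h`,
`TV(p, p*) ≤ ε`, and `x` is a Tukey median of `p`, then
`D(x, p*) ≥ max(1 − h(0) − 2ε, 1/2 − ε)`, and consequently for every `t ≥ 0`
with `h(t) < max(1 − h(0) − 2ε, 1/2 − ε)` we have `|x − μ*| ≤ t`. -/
theorem tukey_median_tv_corruption_dim_one
    (pstar p : Measure ℝ)
    [IsProbabilityMeasure pstar] [IsProbabilityMeasure p]
    (μstar : ℝ) (hsym : IsHalfspaceSymmetric1 pstar μstar)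
    (ε : ℝ) (htv : tvDist1 p pstar ≤ ε)
    (x : ℝ) (hx : IsTukeyMedian1 x p) :
    max (1 - decay1 pstar μstar 0 - 2 * ε) (1 / 2 - ε) ≤ tukeyDepth1 x pstar ∧
    ∀ t : ℝ, 0 ≤ t →
      decay1 pstar μstar t < max (1 - decay1 pstar μstar 0 - 2 * ε) (1 / 2 - ε) →
      |x - μstar| ≤ t :=
  tukey_median_tv_corruption_dim_one_general pstar p μstar ε htv x hx

end
end

section
/- (Breakdown point lower bound in dimension one) Let p* be a Borel probability measure on ℝ that is halfspace-symmetric with center μ*, and let 0 ≤ ε < 1/2. Then there exists a finite constant B such that for every Borel probability measure p on ℝ with TV(p, p*) ≤ ε and every Tukey median x of p, |x − μ*| ≤ B. (Hence in dimension one the breakdown point of the median under TV corruption is at least 1/2.) -/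
open MeasureTheory
open scoped ENNReal

noncomputable section

/-!
A Tukey median of `p` has depth at least `1/2`, since `p` has a classical median. A perturbation
of total variation at most `ε` lowers the mass of each half-line by at most `ε`, so both closed
half-lines at a Tukey median `x` carry `p*`-mass at least `1/2 - ε > 0`. As the tails of `p*`
vanish, this confines `x` to a bounded interval depending only on `p*` and `ε`.
-/

open Filter ProbabilityTheory Topology

theorem tendsto_measure_Ici_atTop_zero (q : Measure ℝ) [IsFiniteMeasure q] :
    Tendsto (fun a => q (Set.Ici a)) atTop (𝓝 0) := by
  have hempty : ⋂ a : ℝ, Set.Ici a = ∅ := Set.eq_empty_of_forall_notMem fun y hy => by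
    linarith [Set.mem_Ici.1 (Set.mem_iInter.1 hy (y + 1))]
  have h := tendsto_measure_iInter_atTop (μ := q) (fun a => measurableSet_Ici.nullMeasurableSet)
    (fun _ _ hab => Set.Ici_subset_Ici.2 hab) ⟨0, measure_ne_top q _⟩
  rwa [hempty, measure_empty] at h

theorem tendsto_measure_Iic_atBot_zero (q : Measure ℝ) [IsFiniteMeasure q] :
    Tendsto (fun a => q (Set.Iic a)) atBot (𝓝 0) := by
  have hempty : ⋂ a : ℝ, Set.Iic a = ∅ := Set.eq_empty_of_forall_notMem fun y hy => by
    linarith [Set.mem_Iic.1 (Set.mem_iInter.1 hy (y - 1))]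
  have h := tendsto_measure_iInter_atBot (μ := q) (fun a => measurableSet_Iic.nullMeasurableSet)
    (fun _ _ hab => Set.Iic_subset_Iic.2 hab) ⟨0, measure_ne_top q _⟩
  rwa [hempty, measure_empty] at h

theorem exists_abs_sub_le_of_le_toReal_measure_Ici_Iic (q : Measure ℝ) [IsFiniteMeasure q]
    (μ : ℝ) {δ : ℝ} (hδ : 0 < δ) :
    ∃ B : ℝ, ∀ x, δ ≤ (q (Set.Ici x)).toReal → δ ≤ (q (Set.Iic x)).toReal →
      |x - μ| ≤ B := by
  have hreal {l : Filter ℝ} {s : ℝ → Set ℝ} (h : Tendsto (fun a => q (s a)) l (𝓝 0)) :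
      ∀ᶠ a in l, (q (s a)).toReal < δ :=
    ((ENNReal.tendsto_toReal ENNReal.zero_ne_top).comp h).eventually (gt_mem_nhds hδ)
  obtain ⟨a, ha⟩ := eventually_atTop.1 (hreal (tendsto_measure_Ici_atTop_zero q))
  obtain ⟨b, hb⟩ := eventually_atBot.1 (hreal (tendsto_measure_Iic_atBot_zero q))
  refine ⟨max (a - μ) (μ - b), fun x hxr hxl => abs_le.2 ⟨?_, ?_⟩⟩
  · have : b < x := lt_of_not_ge fun h => (hb x h).not_ge hxl
    linarith [le_max_right (a - μ) (μ - b)]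
  · have : x < a := lt_of_not_ge fun h => (ha x h).not_ge hxr
    linarith [le_max_left (a - μ) (μ - b)]

theorem toReal_sub_le_tvDist1 (p q : Measure ℝ) [IsFiniteMeasure p] {A : Set ℝ}
    (hA : MeasurableSet A) : (p A).toReal - (q A).toReal ≤ tvDist1 p q := by
  refine le_ciSup (f := fun A : {A : Set ℝ // MeasurableSet A} => (p A).toReal - (q A).toReal)
    ⟨(p Set.univ).toReal, Set.forall_mem_range.2 fun B => ?_⟩ ⟨A, hA⟩
  have : (p B).toReal ≤ (p Set.univ).toReal :=
    ENNReal.toReal_mono (measure_ne_top p _) (measure_mono (Set.subset_univ _))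
  linarith [ENNReal.toReal_nonneg (a := q B)]

theorem exists_half_le_toReal_measure_Iic_Ici (p : Measure ℝ) [IsProbabilityMeasure p] :
    ∃ y : ℝ, 1 / 2 ≤ (p (Set.Iic y)).toReal ∧ 1 / 2 ≤ (p (Set.Ici y)).toReal := by
  set F := cdf p
  set S : Set ℝ := {t | 1 / 2 ≤ F t}
  have hne : S.Nonempty := (((tendsto_cdf_atTop p).eventually
    (lt_mem_nhds (by norm_num : (1 : ℝ) / 2 < 1))).exists).imp fun _ h => h.le
  obtain ⟨t₀, ht₀⟩ := eventually_atBot.1 ((tendsto_cdf_atBot p).eventually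
    (gt_mem_nhds (by norm_num : (0 : ℝ) < 1 / 2)))
  have hbdd : BddBelow S := ⟨t₀, fun s hs => le_of_not_gt fun h => (ht₀ s h.le).not_ge hs⟩
  refine ⟨sInf S, ?_, ?_⟩
  · have hright : ∀ u ∈ Set.Ioi (sInf S), 1 / 2 ≤ F u := fun u hu => by
      obtain ⟨s, hs, hsu⟩ := exists_lt_of_csInf_lt hne hu
      exact hs.trans (F.mono hsu.le)
    rw [← measureReal_def, ← cdf_eq_real]
    exact ge_of_tendsto ((F.right_continuous _).mono Set.Ioi_subset_Ici_self)
      (eventually_nhdsWithin_of_forall hright)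
  · have hleft : Function.leftLim F (sInf S) ≤ 1 / 2 :=
      le_of_tendsto (F.mono.tendsto_leftLim _) (eventually_nhdsWithin_of_forall fun t ht =>
        le_of_not_ge (notMem_of_lt_csInf (s := S) ht hbdd))
    rw [← measure_cdf p, F.measure_Ici (tendsto_cdf_atTop p), ENNReal.toReal_ofReal (by linarith)]
    linarith

theorem IsTukeyMedian1.half_le_tukeyDepth1 {x : ℝ} {p : Measure ℝ} [IsProbabilityMeasure p]
    (hx : IsTukeyMedian1 x p) : 1 / 2 ≤ tukeyDepth1 x p := by
  obtain ⟨y, hyl, hyr⟩ := exists_half_le_toReal_measure_Iic_Ici p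
  exact (le_min hyr hyl).trans (hx y)

theorem median_breakdown_dim_one_general
    (pstar : Measure ℝ) [IsProbabilityMeasure pstar]
    (μstar : ℝ)
    (ε : ℝ) (hε : ε < 1 / 2) :
    ∃ B : ℝ, ∀ p : Measure ℝ, IsProbabilityMeasure p →
      tvDist1 p pstar ≤ ε →
      ∀ x : ℝ, IsTukeyMedian1 x p → |x - μstar| ≤ B := by
  obtain ⟨B, hB⟩ :=
    exists_abs_sub_le_of_le_toReal_measure_Ici_Iic pstar μstar (δ := 1 / 2 - ε) (by linarith)
  refine ⟨B, fun p hp hTV x hx => ?_⟩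
  obtain ⟨hright, hleft⟩ := le_min_iff.1 hx.half_le_tukeyDepth1
  exact hB x (by linarith [toReal_sub_le_tvDist1 p pstar (measurableSet_Ici (a := x))])
    (by linarith [toReal_sub_le_tvDist1 p pstar (measurableSet_Iic (a := x))])

/-- **Breakdown point lower bound in dimension one.**
If `p*` on `ℝ` is halfspace-symmetric with center `μ*` and `0 ≤ ε < 1/2`, then
there is a finite constant `B` such that every Tukey median of any `p` with
`TV(p, p*) ≤ ε` is within distance `B` of `μ*`. -/
theorem median_breakdown_dim_one
    (pstar : Measure ℝ) [IsProbabilityMeasure pstar]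
    (μstar : ℝ) (hsym : IsHalfspaceSymmetric1 pstar μstar)
    (ε : ℝ) (hε0 : 0 ≤ ε) (hε : ε < 1 / 2) :
    ∃ B : ℝ, ∀ p : Measure ℝ, IsProbabilityMeasure p →
      tvDist1 p pstar ≤ ε →
      ∀ x : ℝ, IsTukeyMedian1 x p → |x - μstar| ≤ B :=
  median_breakdown_dim_one_general pstar μstar ε hε

end
end

section
/- (Deterministic core of Theorem 3) Let p̂ and p* be Borel probability measures on ℝ^d, let μ* ∈ ℝ^d, and let μ̂ ∈ ℝ^d satisfy D(μ̂, p̂) ≥ D(μ*, p̂) (in particular this holds if μ̂ is a Tukey median of p̂). Then D(μ̂, p*) ≥ D(μ*, p*) − 2·TV~(p̂, p*). -/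
open MeasureTheory
open scoped RealInnerProductSpace ENNReal

noncomputable section

/- For nonzero `v` the set `{x | 0 ≤ ⟪v, x - μ⟫}` is the halfspace `{x | ⟪v, μ⟫ ≤ ⟪v, x⟫}`, so
its mass under `p̂` and `p*` differs by at most `TV~(p̂, p*)`. Hence the Tukey depth is
`TV~`-Lipschitz in the measure, and the depths of `μ*` and `μ̂` move by at most `TV~` each when
passing between `p̂` and `p*`. -/

section HalfspaceDist

variable {d : ℕ} (p q : Measure (Euc d))

lemma halfspaceDist_comm : halfspaceDist p q = halfspaceDist q p := by
  simp only [halfspaceDist, abs_sub_comm]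

lemma halfspaceDist_nonneg : 0 ≤ halfspaceDist p q :=
  Real.iSup_nonneg fun _ ↦ abs_nonneg _

lemma abs_sub_le_halfspaceDist [IsFiniteMeasure p] [IsFiniteMeasure q] (v : Euc d) (t : ℝ) :
    |(p {x | t ≤ ⟪v, x⟫}).toReal - (q {x | t ≤ ⟪v, x⟫}).toReal| ≤ halfspaceDist p q := by
  refine le_ciSup (f := fun vt : Euc d × ℝ ↦ |(p {x | vt.2 ≤ ⟪vt.1, x⟫}).toReal -
    (q {x | vt.2 ≤ ⟪vt.1, x⟫}).toReal|) ⟨p.real Set.univ + q.real Set.univ, ?_⟩ (v, t)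
  rintro _ ⟨vt, rfl⟩
  have hp : p.real {x | vt.2 ≤ ⟪vt.1, x⟫} ≤ p.real Set.univ := measureReal_mono (Set.subset_univ _)
  have hq : q.real {x | vt.2 ≤ ⟪vt.1, x⟫} ≤ q.real Set.univ := measureReal_mono (Set.subset_univ _)
  simp only [← measureReal_def]
  rw [abs_sub_le_iff]
  constructor <;> linarith [measureReal_nonneg (μ := p) (s := {x | vt.2 ≤ ⟪vt.1, x⟫}),
    measureReal_nonneg (μ := q) (s := {x | vt.2 ≤ ⟪vt.1, x⟫})]

end HalfspaceDist

lemma setOf_inner_sub_nonneg_eq {d : ℕ} (v μ : Euc d) :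
    {x : Euc d | 0 ≤ ⟪v, x - μ⟫} = {x | ⟪v, μ⟫ ≤ ⟪v, x⟫} := by
  ext x
  simp [inner_sub_right]

lemma tukeyDepth_le_add_halfspaceDist {d : ℕ} (μ : Euc d) (p q : Measure (Euc d))
    [IsFiniteMeasure p] [IsFiniteMeasure q] :
    tukeyDepth μ p ≤ tukeyDepth μ q + halfspaceDist p q := by
  rcases isEmpty_or_nonempty {v : Euc d // v ≠ 0} with hd | hd
  · simpa [tukeyDepth] using halfspaceDist_nonneg p q
  rw [← sub_le_iff_le_add]
  refine le_ciInf fun v ↦ ?_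
  have hdepth : tukeyDepth μ p ≤ (p {x | 0 ≤ ⟪(v : Euc d), x - μ⟫}).toReal :=
    ciInf_le ⟨0, by rintro _ ⟨w, rfl⟩; exact ENNReal.toReal_nonneg⟩ v
  have hmass := abs_sub_le_halfspaceDist p q v ⟪(v : Euc d), μ⟫
  rw [← setOf_inner_sub_nonneg_eq, abs_sub_le_iff] at hmass
  linarith [hmass.1]

/-- **Deterministic core of Theorem 3.** If
`D(μ̂, p̂) ≥ D(μ*, p̂)` (in particular if `μ̂` is a Tukey median of `p̂`), then
`D(μ̂, p*) ≥ D(μ*, p*) − 2 TV~(p̂, p*)`. -/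
theorem tukeyDepth_ge_of_halfspaceDist {d : ℕ}
    (phat pstar : Measure (Euc d))
    [IsProbabilityMeasure phat] [IsProbabilityMeasure pstar]
    (μstar μhat : Euc d)
    (h : tukeyDepth μstar phat ≤ tukeyDepth μhat phat) :
    tukeyDepth μstar pstar - 2 * halfspaceDist phat pstar ≤ tukeyDepth μhat pstar := by
  have hstar := tukeyDepth_le_add_halfspaceDist μstar pstar phat
  have hhat := tukeyDepth_le_add_halfspaceDist μhat phat pstar
  rw [halfspaceDist_comm] at hstar
  linarith

end
end

section
/- (Core of Theorem 4) Let h : [0, ∞) → [0, ∞) be a non-increasing function, and let p* and q be Borel probability measures on ℝ^d that are halfspace-symmetric with centers μ* and μ_q respectively, both satisfying the decay bound sup_{v ∈ ℝ^d, ‖v‖ ≤ 1} p({x : ⟨v, x − center⟩ > t}) ≤ h(t) for all t ≥ 0. Suppose TV~(p*, q) ≤ 2ε with ε < 1/2. Then for every t ≥ 0 with h(t) < 1/2 − ε, we have ‖μ_q − μ*‖ ≤ 2t; i.e., ‖μ_q − μ*‖ ≤ 2·h^{-1}(1/2 − ε), where h^{-1}(y) = inf{t ≥ 0 : h(t) <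 y}. -/
open MeasureTheory
open scoped RealInnerProductSpace ENNReal

noncomputable section

/-!
If `‖μq - μ*‖ > 2t`, the hyperplane orthogonal to `μq - μ*` through the midpoint of the two
centers lies at distance `> t` from both. By the decay bound the halfspace beyond it (on the side
of `μq`) has `p*`-mass at most `h t`, and its complement has `q`-mass at most `h t`. So this one
halfspace separates the two measures by at least `1 - 2 h t > 2ε`, contradicting `TV~ ≤ 2ε`.
-/

lemma exists_halfspace_far_from_centers {E : Type*} [NormedAddCommGroup E]
    [InnerProductSpace ℝ E] {μ ν : E} {t : ℝ} (h : 2 * t < ‖ν - μ‖) :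
    ∃ v : E, ∃ s : ℝ, ‖v‖ ≤ 1 ∧ {x | s ≤ ⟪v, x⟫} ⊆ {x | t < ⟪v, x - μ⟫} ∧
      {x | s ≤ ⟪v, x⟫}ᶜ ⊆ {x | t < ⟪-v, x - ν⟫} := by
  set r := ‖ν - μ‖
  have hvr : ⟪r⁻¹ • (ν - μ), ν - μ⟫ = r := by
    rw [real_inner_smul_left, real_inner_self_eq_norm_sq, sq, ← mul_assoc]
    rcases eq_or_ne r 0 with hr | hr
    · simp [hr]
    · rw [inv_mul_cancel₀ hr, one_mul]
  refine ⟨r⁻¹ • (ν - μ), ⟪r⁻¹ • (ν - μ), μ⟫ + r / 2, ?_, ?_, ?_⟩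
  · rw [norm_smul, norm_inv, norm_norm]
    exact inv_mul_le_one_of_le₀ le_rfl (norm_nonneg _)
  all_goals
    intro x hx
    simp only [Set.mem_ofPred_eq, Set.mem_compl_iff, not_le, inner_neg_left, inner_sub_right]
      at hx hvr ⊢
    linarith

lemma measureReal_le_decay {d : ℕ} (p : Measure (Euc d)) [IsFiniteMeasure p] (μ : Euc d)
    {v : Euc d} (hv : ‖v‖ ≤ 1) (t : ℝ) :
    p.real {x | t < ⟪v, x - μ⟫} ≤ decay p μ t :=
  le_ciSup (f := fun w : {w : Euc d // ‖w‖ ≤ 1} => p.real {x | t < ⟪(w : Euc d), x - μ⟫})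
    ⟨p.real Set.univ, by rintro _ ⟨w, rfl⟩; exact measureReal_mono (Set.subset_univ _)⟩ ⟨v, hv⟩

lemma abs_sub_measureReal_halfspace_le_halfspaceDist {d : ℕ} (p q : Measure (Euc d))
    [IsFiniteMeasure p] [IsFiniteMeasure q] (v : Euc d) (s : ℝ) :
    |p.real {x | s ≤ ⟪v, x⟫} - q.real {x | s ≤ ⟪v, x⟫}| ≤ halfspaceDist p q := by
  refine le_ciSup (f := fun vt : Euc d × ℝ =>
    |p.real {x | vt.2 ≤ ⟪vt.1, x⟫} - q.real {x | vt.2 ≤ ⟪vt.1, x⟫}|) ?_ (v, s)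
  refine ⟨p.real Set.univ + q.real Set.univ, ?_⟩
  rintro _ ⟨vt, rfl⟩
  have hp : p.real {x | vt.2 ≤ ⟪vt.1, x⟫} ≤ p.real Set.univ := measureReal_mono (Set.subset_univ _)
  have hq : q.real {x | vt.2 ≤ ⟪vt.1, x⟫} ≤ q.real Set.univ := measureReal_mono (Set.subset_univ _)
  rw [abs_sub_le_iff]
  constructor <;> linarith [measureReal_nonneg (μ := p) (s := {x | vt.2 ≤ ⟪vt.1, x⟫}),
    measureReal_nonneg (μ := q) (s := {x | vt.2 ≤ ⟪vt.1, x⟫})]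

theorem halfspace_projection_core_general {d : ℕ}
    (h : ℝ → ℝ)
    (pstar q : Measure (Euc d))
    [IsProbabilityMeasure pstar] [IsProbabilityMeasure q]
    (μstar μq : Euc d)
    (hdecp : ∀ t, 0 ≤ t → decay pstar μstar t ≤ h t)
    (hdecq : ∀ t, 0 ≤ t → decay q μq t ≤ h t)
    (ε : ℝ)
    (htv : halfspaceDist pstar q ≤ 2 * ε) :
    ∀ t : ℝ, 0 ≤ t → h t < 1 / 2 - ε → ‖μq - μstar‖ ≤ 2 * t := by
  intro t ht hht
  by_contra! hfar
  obtain ⟨v, s, hv, hA, hAc⟩ := exists_halfspace_far_from_centers hfar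
  have hpA : pstar.real {x | s ≤ ⟪v, x⟫} ≤ h t :=
    ((measureReal_mono hA).trans (measureReal_le_decay pstar μstar hv t)).trans (hdecp t ht)
  have hqAc : q.real {x | s ≤ ⟪v, x⟫}ᶜ ≤ h t :=
    ((measureReal_mono hAc).trans
      (measureReal_le_decay q μq (by rwa [norm_neg]) t)).trans (hdecq t ht)
  have hAmeas : MeasurableSet {x : Euc d | s ≤ ⟪v, x⟫} :=
    measurableSet_le measurable_const (measurable_const.inner measurable_id)
  rw [probReal_compl_eq_one_sub hAmeas] at hqAc
  have hsep := abs_sub_measureReal_halfspace_le_halfspaceDist pstar q v s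
  linarith [neg_abs_le (pstar.real {x | s ≤ ⟪v, x⟫} - q.real {x | s ≤ ⟪v, x⟫})]

/-- **Core of Theorem 4.** Let `h` be non-increasing and
non-negative on `[0, ∞)`, and let `p*` and `q` be halfspace-symmetric with
centers `μ*`, `μ_q`, both satisfying the decay bound `h`. If
`TV~(p*, q) ≤ 2ε` with `ε < 1/2`, then for every `t ≥ 0` with `h(t) < 1/2 − ε`
we have `‖μ_q − μ*‖ ≤ 2t` (i.e. `‖μ_q − μ*‖ ≤ 2 h⁻¹(1/2 − ε)`). -/
theorem halfspace_projection_core {d : ℕ}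
    (h : ℝ → ℝ) (hmono : AntitoneOn h (Set.Ici 0)) (hnonneg : ∀ t, 0 ≤ t → 0 ≤ h t)
    (pstar q : Measure (Euc d))
    [IsProbabilityMeasure pstar] [IsProbabilityMeasure q]
    (μstar μq : Euc d)
    (hsymp : IsHalfspaceSymmetric pstar μstar)
    (hsymq : IsHalfspaceSymmetric q μq)
    (hdecp : ∀ t, 0 ≤ t → decay pstar μstar t ≤ h t)
    (hdecq : ∀ t, 0 ≤ t → decay q μq t ≤ h t)
    (ε : ℝ) (hε : ε < 1 / 2)
    (htv : halfspaceDist pstar q ≤ 2 * ε) :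
    ∀ t : ℝ, 0 ≤ t → h t < 1 / 2 - ε → ‖μq - μstar‖ ≤ 2 * t :=
  halfspace_projection_core_general h pstar q μstar μq hdecp hdecq ε htv

end
end
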